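/- arXiv:1410.1184 — 2 statements merged into one kernel-verified Lean document; each statement's English description precedes it below -/
import Mathlib

section
/- Fix integers p ≥ 1 and F ≥ 1, and let λ ≥ 0. Let Ŝ[1],…,Ŝ[F] be arbitrary p×p Hermitian matrices. Then the gLASSO objective J(X) := -A{X} + ⟨Ŝ[·],X[·]⟩ + λ‖X‖₁ attains its minimum on 𝒞: there exists K̂[·] ∈ 𝒞 such that J(K̂) ≤ J(X) for every X[·] ∈ 𝒞. (Existence of a minimizer of the time-series graphical LASSO problem (6).) -/
open Matrix
open scoped ComplexOrder

/-- Squared Frobenius norm of a single complex matrix. -/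
noncomputable def frobSq {p : ℕ} (M : Matrix (Fin p) (Fin p) ℂ) : ℝ :=
  ∑ i, ∑ j, ‖M i j‖ ^ 2

/-- The norm ‖X_{i,j}[·]‖ of the (i,j) entry group of a matrix sequence. -/
noncomputable def entryNorm {p F : ℕ} (X : Fin F → Matrix (Fin p) (Fin p) ℂ)
    (i j : Fin p) : ℝ :=
  Real.sqrt ((1 / (F : ℝ)) * ∑ f, ‖X f i j‖ ^ 2)

/-- The ℓ₁-norm ‖X‖₁ of a matrix sequence. -/
noncomputable def l1Norm {p F : ℕ} (X : Fin F → Matrix (Fin p) (Fin p) ℂ) : ℝ :=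
  ∑ i, ∑ j, entryNorm X i j

/-- The inner product ⟨A[·],B[·]⟩ (real part). -/
noncomputable def seqInner {p F : ℕ} (A B : Fin F → Matrix (Fin p) (Fin p) ℂ) : ℝ :=
  (1 / (F : ℝ)) * ∑ f, ((A f * B f).trace).re

/-- A{X} = (1/F) ∑_f log det X[f]. -/
noncomputable def Afun {p F : ℕ} (X : Fin F → Matrix (Fin p) (Fin p) ℂ) : ℝ :=
  (1 / (F : ℝ)) * ∑ f, Real.log (((X f).det).re)

/-- The constraint set 𝒞: sequences of Hermitian matrices with 0 ≺ X[f] ⪯ I. -/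
def memC {p F : ℕ} (X : Fin F → Matrix (Fin p) (Fin p) ℂ) : Prop :=
  ∀ f, (X f).IsHermitian ∧ (X f).PosDef ∧
    ((1 : Matrix (Fin p) (Fin p) ℂ) - X f).PosSemidef

/-- The gLASSO objective J(X) = -A{X} + ⟨Ŝ,X⟩ + λ‖X‖₁. -/
noncomputable def glassoObj {p F : ℕ} (Shat : Fin F → Matrix (Fin p) (Fin p) ℂ)
    (lam : ℝ) (X : Fin F → Matrix (Fin p) (Fin p) ℂ) : ℝ :=
  - Afun X + seqInner Shat X + lam * l1Norm X

-- X_𝒮[·]: the sequence restricted to the index set 𝒮.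
open Classical in
noncomputable def restrictSeq {p F : ℕ} (S : Set (Fin p × Fin p))
    (X : Fin F → Matrix (Fin p) (Fin p) ℂ) : Fin F → Matrix (Fin p) (Fin p) ℂ :=
  fun f => Matrix.of fun i j => if (i, j) ∈ S then X f i j else 0

/-- Generalized support of a matrix sequence. -/
def gsupp {p F : ℕ} (X : Fin F → Matrix (Fin p) (Fin p) ℂ) : Set (Fin p × Fin p) :=
  {ij | ∃ f, X f ij.1 ij.2 ≠ 0}

/-! On `𝒞` every entry of `X[f]` has modulus at most `1` and `0 < det X[f] ≤ 1`, so
`⟨Ŝ, X⟩ ≥ -(1/F) ∑ |Ŝ[f]ᵢⱼ|`, `λ‖X‖₁ ≥ 0` and every term `-log det X[f]` of `-A{X}` is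
nonnegative. Hence, once some `det X[f]` drops below `δ = exp (-F (J(I) + (1/F) ∑ |Ŝ[f]ᵢⱼ|))`, the
single term `-(1/F) log det X[f]` already forces `J(X) ≥ J(I)`. The part of `𝒞` where every
`det X[f] ≥ δ` is compact and contains `I`, and `J` is continuous on it, so a minimizer of `J` there
is a minimizer on all of `𝒞`. -/

namespace Matrix

variable {n 𝕜 : Type*} [Fintype n] [RCLike 𝕜] {M : Matrix n n 𝕜}

theorem PosSemidef.norm_apply_le_sqrt_mul_sqrt (hM : M.PosSemidef) (i j : n) :
    ‖M i j‖ ≤ √(RCLike.re (M i i)) * √(RCLike.re (M j j)) := by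
  classical
  -- Cauchy–Schwarz for the semi-inner product `⟪x, y⟫ = xᴴ M y`, at two basis vectors.
  let _ := M.toSeminormedAddCommGroup hM
  let _ := M.toInnerProductSpace hM
  have inner_single : ∀ a b : n, inner 𝕜 (Pi.single a 1 : n → 𝕜) (Pi.single b 1) = M a b := by
    intro a b
    change (M *ᵥ Pi.single b 1) ⬝ᵥ star (Pi.single a 1) = _
    simp
  have := norm_inner_le_norm (𝕜 := 𝕜) (Pi.single i 1 : n → 𝕜) (Pi.single j 1)
  rwa [inner_single, norm_eq_sqrt_re_inner (𝕜 := 𝕜) (Pi.single i 1 : n → 𝕜),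
    norm_eq_sqrt_re_inner (𝕜 := 𝕜) (Pi.single j 1 : n → 𝕜), inner_single, inner_single] at this

variable [DecidableEq n]

omit [Fintype n] in
theorem re_apply_self_le_one_of_posSemidef_one_sub (h1 : (1 - M).PosSemidef) (i : n) :
    RCLike.re (M i i) ≤ 1 := by
  simpa using (RCLike.nonneg_iff.mp (h1.diag_nonneg (i := i))).1

theorem PosSemidef.norm_apply_le_one (hM : M.PosSemidef) (h1 : (1 - M).PosSemidef) (i j : n) :
    ‖M i j‖ ≤ 1 :=
  (hM.norm_apply_le_sqrt_mul_sqrt i j).trans <|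
    mul_le_one₀ (Real.sqrt_le_one.mpr (re_apply_self_le_one_of_posSemidef_one_sub h1 i))
      (Real.sqrt_nonneg _) (Real.sqrt_le_one.mpr (re_apply_self_le_one_of_posSemidef_one_sub h1 j))

open scoped MatrixOrder in
theorem IsHermitian.eigenvalues_le_one (hM : M.IsHermitian) (h1 : (1 - M).PosSemidef) (i : n) :
    hM.eigenvalues i ≤ 1 :=
  (CFC.le_one_iff (R := ℝ) M hM.isSelfAdjoint).mp (Matrix.le_iff.mpr h1) _
    (hM.eigenvalues_mem_spectrum_real i)

theorem PosSemidef.re_det_le_one (hM : M.PosSemidef) (h1 : (1 - M).PosSemidef) :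
    RCLike.re M.det ≤ 1 := by
  rw [hM.isHermitian.det_eq_prod_eigenvalues, ← RCLike.ofReal_prod, RCLike.ofReal_re]
  exact Finset.prod_le_one (fun i _ => hM.eigenvalues_nonneg i)
    (fun i _ => hM.isHermitian.eigenvalues_le_one h1 i)

theorem PosDef.re_det_pos (hM : M.PosDef) : 0 < RCLike.re M.det :=
  (RCLike.pos_iff.mp hM.det_pos).1

omit [DecidableEq n] in
theorem isClosed_setOf_posSemidef : IsClosed {M : Matrix n n 𝕜 | M.PosSemidef} := by
  simp only [posSemidef_iff_dotProduct_mulVec, Set.ofPred_and, Set.ofPred_forall]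
  refine (isClosed_eq (continuous_id.matrix_conjTranspose) continuous_id).inter
    (isClosed_iInter fun x => isClosed_le continuous_const ?_)
  exact continuous_const.dotProduct (continuous_id.matrix_mulVec continuous_const)

end Matrix

theorem Matrix.norm_trace_mul_le {n α : Type*} [Fintype n] [SeminormedRing α]
    (A B : Matrix n n α) {b : ℝ} (hB : ∀ i j, ‖B i j‖ ≤ b) :
    ‖(A * B).trace‖ ≤ (∑ i, ∑ j, ‖A i j‖) * b := by
  rw [Finset.sum_mul]
  refine (norm_sum_le _ _).trans (Finset.sum_le_sum fun i _ => ?_)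
  rw [Finset.sum_mul]
  refine (norm_sum_le _ _).trans (Finset.sum_le_sum fun j _ => ?_)
  exact (norm_mul_le _ _).trans (mul_le_mul_of_nonneg_left (hB j i) (norm_nonneg _))

section GLasso

variable {p F : ℕ}

/-- `𝒞` with `0 ≺ X[f]` tightened to `δ ≤ det X[f]`: a compact set, unlike `𝒞`. -/
def truncC (δ : ℝ) : Set (Fin F → Matrix (Fin p) (Fin p) ℂ) :=
  {X | ∀ f, (X f).PosSemidef ∧ (1 - X f).PosSemidef ∧ δ ≤ (X f).det.re}

noncomputable def seqEntrywiseL1 (S : Fin F → Matrix (Fin p) (Fin p) ℂ) : ℝ :=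
  (1 / (F : ℝ)) * ∑ f, ∑ i, ∑ j, ‖S f i j‖

theorem memC_one : memC (fun _ : Fin F => (1 : Matrix (Fin p) (Fin p) ℂ)) :=
  fun _ => ⟨isHermitian_one, PosDef.one, by simpa using PosSemidef.zero⟩

theorem neg_seqEntrywiseL1_le_seqInner (S X : Fin F → Matrix (Fin p) (Fin p) ℂ)
    (hX : ∀ f i j, ‖X f i j‖ ≤ 1) : -seqEntrywiseL1 S ≤ seqInner S X := by
  unfold seqEntrywiseL1 seqInner
  rw [← mul_neg, ← Finset.sum_neg_distrib]
  gcongr with f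
  exact neg_le_of_abs_le <| (Complex.abs_re_le_norm _).trans <|
    (Matrix.norm_trace_mul_le _ _ (hX f)).trans_eq (mul_one _)

theorem l1Norm_nonneg (X : Fin F → Matrix (Fin p) (Fin p) ℂ) : 0 ≤ l1Norm X :=
  Finset.sum_nonneg fun _ _ => Finset.sum_nonneg fun _ _ => Real.sqrt_nonneg _

theorem memC.neg_log_det_nonneg {X : Fin F → Matrix (Fin p) (Fin p) ℂ} (hX : memC X)
    (f : Fin F) : 0 ≤ -Real.log (X f).det.re :=
  neg_nonneg.mpr <| Real.log_nonpos (hX f).2.1.re_det_pos.le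
    ((hX f).2.1.posSemidef.re_det_le_one (hX f).2.2)

theorem memC.inv_mul_neg_log_det_le_neg_Afun {X : Fin F → Matrix (Fin p) (Fin p) ℂ}
    (hX : memC X) (f : Fin F) : (1 / (F : ℝ)) * -Real.log (X f).det.re ≤ -Afun X := by
  rw [Afun, ← mul_neg, ← Finset.sum_neg_distrib]
  gcongr
  exact Finset.single_le_sum (fun g _ => hX.neg_log_det_nonneg g) (Finset.mem_univ f)

theorem memC.Afun_nonpos {X : Fin F → Matrix (Fin p) (Fin p) ℂ} (hX : memC X) : Afun X ≤ 0 := by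
  rw [Afun, ← neg_nonneg, ← mul_neg, ← Finset.sum_neg_distrib]
  exact mul_nonneg (by positivity) (Finset.sum_nonneg fun f _ => hX.neg_log_det_nonneg f)

theorem memC.sub_Afun_le_glassoObj (S : Fin F → Matrix (Fin p) (Fin p) ℂ) {lam : ℝ}
    (hlam : 0 ≤ lam) {X : Fin F → Matrix (Fin p) (Fin p) ℂ} (hX : memC X) :
    -seqEntrywiseL1 S - Afun X ≤ glassoObj S lam X := by
  have hinner := neg_seqEntrywiseL1_le_seqInner S X fun f i j =>
    (hX f).2.1.posSemidef.norm_apply_le_one (hX f).2.2 i j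
  have hpen := mul_nonneg hlam (l1Norm_nonneg X)
  rw [glassoObj]
  linarith

theorem memC.le_glassoObj_of_det_le (S : Fin F → Matrix (Fin p) (Fin p) ℂ) {lam : ℝ}
    (hlam : 0 ≤ lam) {X : Fin F → Matrix (Fin p) (Fin p) ℂ} (hX : memC X) {f : Fin F} {c : ℝ}
    (hdet : (X f).det.re ≤ Real.exp (-(F * c))) : c - seqEntrywiseL1 S ≤ glassoObj S lam X := by
  have hF : (0 : ℝ) < F := Nat.cast_pos.mpr f.pos
  have hlog : Real.log (X f).det.re ≤ -(F * c) :=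
    (Real.log_le_log (hX f).2.1.re_det_pos hdet).trans_eq (Real.log_exp _)
  have hc : c ≤ (1 / (F : ℝ)) * -Real.log (X f).det.re := by
    rw [one_div, le_inv_mul_iff₀ hF]
    linarith
  linarith [hX.inv_mul_neg_log_det_le_neg_Afun f, hX.sub_Afun_le_glassoObj S hlam]

theorem one_mem_truncC {δ : ℝ} (hδ : δ ≤ 1) :
    (fun _ : Fin F => (1 : Matrix (Fin p) (Fin p) ℂ)) ∈ truncC δ :=
  fun _ => ⟨PosSemidef.one, by simpa using PosSemidef.zero, by simpa using hδ⟩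

theorem memC_of_mem_truncC {δ : ℝ} (hδ : 0 < δ) {X : Fin F → Matrix (Fin p) (Fin p) ℂ}
    (hX : X ∈ truncC δ) : memC X := by
  intro f
  obtain ⟨hpsd, hle, hdet⟩ := hX f
  refine ⟨hpsd.isHermitian, hpsd.posDef_iff_det_ne_zero.mpr fun h => ?_, hle⟩
  rw [h, Complex.zero_re] at hdet
  linarith

theorem mem_truncC_of_memC {δ : ℝ} {X : Fin F → Matrix (Fin p) (Fin p) ℂ} (hX : memC X)
    (hdet : ∀ f, δ ≤ (X f).det.re) : X ∈ truncC δ :=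
  fun f => ⟨(hX f).2.1.posSemidef, (hX f).2.2, hdet f⟩

theorem isCompact_truncC (δ : ℝ) : IsCompact (truncC (p := p) (F := F) δ) := by
  have hbox : IsCompact (Set.univ.pi fun _ : Fin F =>
      (Set.univ.pi fun _ : Fin p => Set.univ.pi fun _ : Fin p => Metric.closedBall (0 : ℂ) 1 :
        Set (Matrix (Fin p) (Fin p) ℂ))) :=
    isCompact_univ_pi fun _ => isCompact_univ_pi fun _ => isCompact_univ_pi fun _ =>
      isCompact_closedBall 0 1
  refine hbox.of_isClosed_subset ?_ fun X hX f _ i _ j _ => by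
    simpa using (hX f).1.norm_apply_le_one (hX f).2.1 i j
  simp only [truncC, Set.ofPred_forall, Set.ofPred_and]
  refine isClosed_iInter fun f => ?_
  refine (isClosed_setOf_posSemidef.preimage (continuous_apply f)).inter
    ((isClosed_setOf_posSemidef.preimage (f := fun X : Fin F → Matrix (Fin p) (Fin p) ℂ => 1 - X f)
      (continuous_const.sub (continuous_apply f))).inter ?_)
  exact isClosed_le continuous_const (Complex.continuous_re.comp (continuous_apply f).matrix_det)

theorem continuous_seqInner (S : Fin F → Matrix (Fin p) (Fin p) ℂ) :
    Continuous (seqInner S) :=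
  continuous_const.mul <| continuous_finsetSum _ fun f _ => Complex.continuous_re.comp
    (continuous_const.matrix_mul (continuous_apply f)).matrix_trace

theorem continuous_l1Norm : Continuous (l1Norm (p := p) (F := F)) :=
  continuous_finsetSum _ fun i _ => continuous_finsetSum _ fun j _ =>
    Real.continuous_sqrt.comp <| continuous_const.mul <| continuous_finsetSum _ fun f _ =>
      ((continuous_apply f).matrix_elem i j).norm.pow 2

theorem continuousOn_Afun :
    ContinuousOn (Afun (p := p) (F := F)) {X | ∀ f, (X f).det.re ≠ 0} :=
  continuousOn_const.mul <| continuousOn_finsetSum _ fun f _ =>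
    (Complex.continuous_re.comp (continuous_apply f).matrix_det).continuousOn.log fun _ hX => hX f

theorem continuousOn_glassoObj (S : Fin F → Matrix (Fin p) (Fin p) ℂ) (lam : ℝ) :
    ContinuousOn (glassoObj S lam) {X | ∀ f, (X f).det.re ≠ 0} :=
  (continuousOn_Afun.neg.add (continuous_seqInner S).continuousOn).add
    (continuous_const.mul continuous_l1Norm).continuousOn

end GLasso

theorem stmt_4_general (p F : ℕ) (lam : ℝ) (hlam : 0 ≤ lam)
    (Shat : Fin F → Matrix (Fin p) (Fin p) ℂ) :
    ∃ Khat : Fin F → Matrix (Fin p) (Fin p) ℂ, memC Khat ∧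
      ∀ X, memC X → glassoObj Shat lam Khat ≤ glassoObj Shat lam X := by
  set J := glassoObj Shat lam
  set c := J (fun _ => 1) + seqEntrywiseL1 Shat
  set δ := Real.exp (-(F * c))
  have hc : 0 ≤ c := by
    linarith [memC_one.sub_Afun_le_glassoObj Shat hlam, (memC_one (p := p) (F := F)).Afun_nonpos]
  have hδ : 0 < δ := Real.exp_pos _
  have hδ1 : δ ≤ 1 := Real.exp_le_one_iff.mpr (neg_nonpos.mpr (by positivity))
  obtain ⟨Khat, hKhat, hmin⟩ := (isCompact_truncC δ).exists_isMinOn ⟨_, one_mem_truncC hδ1⟩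
    ((continuousOn_glassoObj Shat lam).mono fun X hX f => (hX f).2.2.trans_lt' hδ |>.ne')
  refine ⟨Khat, memC_of_mem_truncC hδ hKhat, fun X hX => ?_⟩
  by_cases hdet : ∀ f, δ ≤ (X f).det.re
  · exact hmin (mem_truncC_of_memC hX hdet)
  · obtain ⟨f, hf⟩ := not_forall.mp hdet
    calc J Khat ≤ J (fun _ => 1) := hmin (one_mem_truncC hδ1)
      _ = c - seqEntrywiseL1 Shat := by ring
      _ ≤ J X := hX.le_glassoObj_of_det_le Shat hlam (not_le.mp hf).le

/-- existence of a minimizer of the time-series graphical LASSO problem (6). -/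
theorem stmt_4 (p F : ℕ) (hp : 1 ≤ p) (hF : 1 ≤ F) (lam : ℝ) (hlam : 0 ≤ lam)
    (Shat : Fin F → Matrix (Fin p) (Fin p) ℂ) (hShat : ∀ f, (Shat f).IsHermitian) :
    ∃ Khat : Fin F → Matrix (Fin p) (Fin p) ℂ, memC Khat ∧
      ∀ X, memC X → glassoObj Shat lam Khat ≤ glassoObj Shat lam X :=
  stmt_4_general p F lam hlam Shat
end

section
/- Fix integers p ≥ 1, F ≥ 1 and a real λ > 0. Let S[1],…,S[F] be p×p Hermitian matrices with I ⪯ S[f] for all f, set K[f] := S[f]⁻¹, and let 𝒮 := gsupp(K[·]). Let Ŝ[1],…,Ŝ[F] be p×p Hermitian matrices with max_f max_{i,j} |S[f]_{i,j} - Ŝ[f]_{i,j}| ≤ λ/2. If K̂[·] ∈ 𝒞 minimizes J(X) := -A{X} + ⟨Ŝ[·],X[·]⟩ + λ‖X‖₁ over 𝒞, then the error Δ[·] := K̂[·] - K[·] satisfies the cone condition ‖Δ_{𝒮^c}‖₁ ≤ 3 ‖Δ_𝒮‖₁. (Inequality (21): the gLASSO estimation error tends to be sparse.) -/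
open Matrix
open scoped ComplexOrder

/-!
Since `I ⪯ S`, the true precision `K = S⁻¹` lies in `𝒞`, so `J(K̂) ≤ J(K)`. By concavity of
`log det` (its tangent at `K` has slope `S`) this gives
`λ (‖K̂‖₁ - ‖K‖₁) ≤ ⟨S - Ŝ, Δ⟩ ≤ (λ/2) ‖Δ‖₁`, the last step because the entries of `S - Ŝ` are at
most `λ/2` and the mean of `|Δ[f]_{i,j}|` over `f` is at most its root mean square. On the other
hand `‖·‖₁` decomposes along `𝒮 = gsupp K`: `K̂` agrees with `Δ` off `𝒮`, whence
`‖K̂‖₁ - ‖K‖₁ ≥ ‖Δ_{𝒮ᶜ}‖₁ - ‖Δ_𝒮‖₁`. Combining the two bounds and dividing by `λ > 0` yields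
`‖Δ_{𝒮ᶜ}‖₁ ≤ 3 ‖Δ_𝒮‖₁`.
-/

namespace Matrix

lemma posDef_of_posSemidef_sub_one {n : Type*} [DecidableEq n] {S : Matrix n n ℂ}
    (hS : (S - 1).PosSemidef) : S.PosDef := by
  simpa using PosDef.one.add_posSemidef hS

variable {n : Type*} [Fintype n] [DecidableEq n]

lemma PosDef.log_det_re_le_trace_re_sub_card {M : Matrix n n ℂ} (hM : M.PosDef) :
    Real.log M.det.re ≤ M.trace.re - Fintype.card n := by
  have hdet : M.det.re = ∏ i, hM.isHermitian.eigenvalues i := by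
    rw [hM.isHermitian.det_eq_prod_eigenvalues]; norm_cast
  have htr : M.trace.re = ∑ i, hM.isHermitian.eigenvalues i := by
    rw [hM.isHermitian.trace_eq_sum_eigenvalues]; norm_cast
  rw [hdet, htr, Real.log_prod fun i _ => (hM.eigenvalues_pos i).ne']
  calc ∑ i, Real.log (hM.isHermitian.eigenvalues i)
      ≤ ∑ i, (hM.isHermitian.eigenvalues i - 1) :=
        Finset.sum_le_sum fun i _ => Real.log_le_sub_one_of_pos (hM.eigenvalues_pos i)
    _ = _ := by simp [Finset.sum_sub_distrib]

lemma PosDef.det_re_pos {M : Matrix n n ℂ} (hM : M.PosDef) : 0 < M.det.re :=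
  (Complex.lt_def.mp hM.det_pos).1

lemma PosDef.ofReal_det_re {M : Matrix n n ℂ} (hM : M.PosDef) : (M.det.re : ℂ) = M.det :=
  Complex.ext rfl (by simpa using (Complex.lt_def.mp hM.det_pos).2)

open MatrixOrder in
/-- Conjugating `X` by `√S` reduces this to `log det ≤ tr - n` for `√S X √S`. -/
lemma PosDef.log_det_re_add_log_det_re_le {S X : Matrix n n ℂ} (hS : S.PosDef) (hX : X.PosDef) :
    Real.log X.det.re + Real.log S.det.re ≤ (S * X).trace.re - Fintype.card n := by
  set C := CFC.sqrt S
  have hC : C.IsHermitian := (CFC.sqrt_nonneg S).posSemidef.isHermitian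
  have hCC : C * C = S := CFC.sqrt_mul_sqrt_self S hS.posSemidef.nonneg
  have hCunit : IsUnit C := isUnit_of_mul_isUnit_left (hCC ▸ hS.isUnit)
  have hCXC : (C * X * C).PosDef := by
    simpa [hC.eq] using hX.conjTranspose_mul_mul_same (mulVec_injective_of_isUnit hCunit)
  have htr : (C * X * C).trace = (S * X).trace := by rw [trace_mul_cycle, hCC]
  have hdet : (C * X * C).det = S.det * X.det := by
    rw [← hCC, det_mul, det_mul, det_mul]; ring
  have := hCXC.log_det_re_le_trace_re_sub_card
  rwa [htr, hdet, ← hS.ofReal_det_re, ← hX.ofReal_det_re, ← Complex.ofReal_mul,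
    Complex.ofReal_re, Real.log_mul hS.det_re_pos.ne' hX.det_re_pos.ne', add_comm] at this

/-- The tangent-line inequality for the concave function `log det` at `S⁻¹`, where its gradient
is `S`. -/
lemma PosDef.log_det_re_sub_log_det_inv_re_le {S X : Matrix n n ℂ} (hS : S.PosDef)
    (hX : X.PosDef) :
    Real.log X.det.re - Real.log S⁻¹.det.re ≤ (S * (X - S⁻¹)).trace.re := by
  have hdet : S⁻¹.det.re = S.det.re⁻¹ := by
    rw [det_nonsing_inv, ← hS.ofReal_det_re, Ring.inverse_eq_inv, ← Complex.ofReal_inv,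
      Complex.ofReal_re, Complex.ofReal_re]
  rw [hdet, Real.log_inv, mul_sub, mul_nonsing_inv S ((isUnit_iff_isUnit_det S).mp hS.isUnit),
    trace_sub, trace_one, Complex.sub_re, sub_neg_eq_add]
  simpa using hS.log_det_re_add_log_det_re_le hX

open MatrixOrder Matrix.Norms.L2Operator in
lemma one_sub_inv_posSemidef_of_sub_one {S : Matrix n n ℂ} (hS : (S - 1).PosSemidef) :
    (1 - S⁻¹).PosSemidef := by
  have h : (1 : Matrix n n ℂ) ≤ S := hS
  have := CStarAlgebra.ringInverse_le_ringInverse h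
  rwa [Ring.inverse_one, ← nonsing_inv_eq_ringInverse] at this

end Matrix

section MatrixSeq

variable {p F : ℕ}

lemma entryNorm_eq_mul_norm (X : Fin F → Matrix (Fin p) (Fin p) ℂ) (i j : Fin p) :
    entryNorm X i j = √(1 / (F : ℝ)) * ‖WithLp.toLp 2 fun f => X f i j‖ := by
  rw [EuclideanSpace.norm_eq, ← Real.sqrt_mul (by positivity)]
  rfl

lemma entryNorm_sub_le (X Y : Fin F → Matrix (Fin p) (Fin p) ℂ) (i j : Fin p) :
    entryNorm (X - Y) i j ≤ entryNorm X i j + entryNorm Y i j := by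
  simp only [entryNorm_eq_mul_norm, ← mul_add]
  gcongr
  exact norm_sub_le (WithLp.toLp 2 fun f => X f i j) (WithLp.toLp 2 fun f => Y f i j)

lemma entryNorm_congr {X Y : Fin F → Matrix (Fin p) (Fin p) ℂ} {i j : Fin p}
    (h : ∀ f, X f i j = Y f i j) : entryNorm X i j = entryNorm Y i j := by
  simp only [entryNorm, h]

lemma mean_norm_le_entryNorm (X : Fin F → Matrix (Fin p) (Fin p) ℂ) (i j : Fin p) :
    1 / (F : ℝ) * ∑ f, ‖X f i j‖ ≤ entryNorm X i j := by
  refine Real.le_sqrt_of_sq_le ?_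
  have hcs := sq_sum_le_card_mul_sum_sq (s := Finset.univ) (f := fun f => ‖X f i j‖)
  rw [Finset.card_univ, Fintype.card_fin] at hcs
  calc (1 / (F : ℝ) * ∑ f, ‖X f i j‖) ^ 2 = (1 / (F : ℝ)) ^ 2 * (∑ f, ‖X f i j‖) ^ 2 := by ring
    _ ≤ (1 / (F : ℝ)) ^ 2 * (F * ∑ f, ‖X f i j‖ ^ 2) := by gcongr
    _ = 1 / (F : ℝ) * ∑ f, ‖X f i j‖ ^ 2 := by
      rcases eq_or_ne (F : ℝ) 0 with hF | hF
      · simp [hF]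
      · field_simp

open Classical in
lemma entryNorm_restrictSeq (T : Set (Fin p × Fin p)) (X : Fin F → Matrix (Fin p) (Fin p) ℂ)
    (i j : Fin p) :
    entryNorm (restrictSeq T X) i j = if (i, j) ∈ T then entryNorm X i j else 0 := by
  split_ifs with h <;> simp [entryNorm, restrictSeq, h]

lemma l1Norm_restrictSeq_add_restrictSeq_compl (T : Set (Fin p × Fin p))
    (X : Fin F → Matrix (Fin p) (Fin p) ℂ) :
    l1Norm (restrictSeq T X) + l1Norm (restrictSeq Tᶜ X) = l1Norm X := by
  classical
  simp only [l1Norm, entryNorm_restrictSeq, ← Finset.sum_add_distrib, Set.mem_compl_iff]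
  refine Finset.sum_congr rfl fun i _ => Finset.sum_congr rfl fun j _ => ?_
  split_ifs <;> simp

lemma l1Norm_add_l1Norm_restrictSeq_compl_gsupp_le (X Y : Fin F → Matrix (Fin p) (Fin p) ℂ) :
    l1Norm X + l1Norm (restrictSeq (gsupp X)ᶜ (Y - X)) ≤
      l1Norm Y + l1Norm (restrictSeq (gsupp X) (Y - X)) := by
  classical
  simp only [l1Norm, entryNorm_restrictSeq, ← Finset.sum_add_distrib, Set.mem_compl_iff]
  refine Finset.sum_le_sum fun i _ => Finset.sum_le_sum fun j _ => ?_
  split_ifs with h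
  · simpa using entryNorm_sub_le Y (Y - X) i j
  · have hX : ∀ f, X f i j = 0 := fun f => by_contra fun hf => h ⟨f, hf⟩
    have hX' : entryNorm X i j = 0 := by simp [entryNorm, hX]
    rw [hX', entryNorm_congr (Y := Y) fun f => by simp [hX f]]
    simp

lemma re_trace_mul_le {A B : Matrix (Fin p) (Fin p) ℂ} {c : ℝ} (hA : ∀ i j, ‖A i j‖ ≤ c) :
    (A * B).trace.re ≤ c * ∑ i, ∑ j, ‖B i j‖ := by
  rw [Finset.sum_comm, Finset.mul_sum]
  simp only [trace, diag, mul_apply, Complex.re_sum, Finset.mul_sum]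
  refine Finset.sum_le_sum fun i _ => Finset.sum_le_sum fun j _ => ?_
  calc (A i j * B j i).re ≤ ‖A i j‖ * ‖B j i‖ := (Complex.re_le_norm _).trans (norm_mul _ _).le
    _ ≤ c * ‖B j i‖ := mul_le_mul_of_nonneg_right (hA i j) (norm_nonneg _)

lemma seqInner_le_mul_l1Norm {A : Fin F → Matrix (Fin p) (Fin p) ℂ} {c : ℝ} (hc : 0 ≤ c)
    (hA : ∀ f i j, ‖A f i j‖ ≤ c) (B : Fin F → Matrix (Fin p) (Fin p) ℂ) :
    seqInner A B ≤ c * l1Norm B :=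
  calc seqInner A B ≤ 1 / (F : ℝ) * ∑ f, c * ∑ i, ∑ j, ‖B f i j‖ := by
        unfold seqInner
        gcongr with f
        exact re_trace_mul_le (hA f)
    _ = c * ∑ i, ∑ j, 1 / (F : ℝ) * ∑ f, ‖B f i j‖ := by
        simp only [Finset.mul_sum]
        rw [Finset.sum_comm]
        refine Finset.sum_congr rfl fun i _ => ?_
        rw [Finset.sum_comm]
        exact Finset.sum_congr rfl fun j _ => Finset.sum_congr rfl fun f _ => by ring
    _ ≤ c * l1Norm B := by
        unfold l1Norm
        gcongr with i _ j _
        exact mean_norm_le_entryNorm B i j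

lemma seqInner_sub_left (A B X : Fin F → Matrix (Fin p) (Fin p) ℂ) :
    seqInner (A - B) X = seqInner A X - seqInner B X := by
  rw [seqInner, seqInner, seqInner, ← mul_sub, ← Finset.sum_sub_distrib]
  simp only [Pi.sub_apply, sub_mul, trace_sub, Complex.sub_re]

lemma seqInner_sub_right (A X Y : Fin F → Matrix (Fin p) (Fin p) ℂ) :
    seqInner A (X - Y) = seqInner A X - seqInner A Y := by
  rw [seqInner, seqInner, seqInner, ← mul_sub, ← Finset.sum_sub_distrib]
  simp only [Pi.sub_apply, mul_sub, trace_sub, Complex.sub_re]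

end MatrixSeq

section Glasso

variable {p F : ℕ}

lemma memC_inv {S : Fin F → Matrix (Fin p) (Fin p) ℂ} (hS : ∀ f, (S f - 1).PosSemidef) :
    memC fun f => (S f)⁻¹ := fun f =>
  have hSf := posDef_of_posSemidef_sub_one (hS f)
  ⟨hSf.inv.isHermitian, hSf.inv, one_sub_inv_posSemidef_of_sub_one (hS f)⟩

lemma Afun_sub_Afun_inv_le_seqInner {S X : Fin F → Matrix (Fin p) (Fin p) ℂ}
    (hS : ∀ f, (S f).PosDef) (hX : ∀ f, (X f).PosDef) :
    Afun X - Afun (fun f => (S f)⁻¹) ≤ seqInner S (X - fun f => (S f)⁻¹) := by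
  rw [Afun, Afun, seqInner, ← mul_sub, ← Finset.sum_sub_distrib]
  gcongr with f
  exact (hS f).log_det_re_sub_log_det_inv_re_le (hX f)

lemma mul_l1Norm_sub_le_seqInner_of_isMin {S Shat Khat : Fin F → Matrix (Fin p) (Fin p) ℂ}
    {lam : ℝ} (hS : ∀ f, (S f - 1).PosSemidef) (hKhat : memC Khat)
    (hmin : ∀ X, memC X → glassoObj Shat lam Khat ≤ glassoObj Shat lam X) :
    lam * (l1Norm Khat - l1Norm fun f => (S f)⁻¹) ≤
      seqInner (S - Shat) (Khat - fun f => (S f)⁻¹) := by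
  have hopt := hmin _ (memC_inv hS)
  have hlogdet := Afun_sub_Afun_inv_le_seqInner (fun f => posDef_of_posSemidef_sub_one (hS f))
    fun f => (hKhat f).2.1
  rw [seqInner_sub_left, seqInner_sub_right Shat]
  unfold glassoObj at hopt
  linarith

end Glasso

theorem stmt_7_general (p F : ℕ) (lam : ℝ) (hlam : 0 < lam)
    (S : Fin F → Matrix (Fin p) (Fin p) ℂ)
    (hSlow : ∀ f, (S f - 1).PosSemidef)
    (K : Fin F → Matrix (Fin p) (Fin p) ℂ) (hK : ∀ f, K f = (S f)⁻¹)
    (𝒮 : Set (Fin p × Fin p)) (h𝒮 : 𝒮 = gsupp K)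
    (Shat : Fin F → Matrix (Fin p) (Fin p) ℂ)
    (herr : ∀ f i j, ‖S f i j - Shat f i j‖ ≤ lam / 2)
    (Khat : Fin F → Matrix (Fin p) (Fin p) ℂ) (hKhatC : memC Khat)
    (hmin : ∀ X, memC X → glassoObj Shat lam Khat ≤ glassoObj Shat lam X) :
    l1Norm (restrictSeq 𝒮ᶜ (fun f => Khat f - K f)) ≤
      3 * l1Norm (restrictSeq 𝒮 (fun f => Khat f - K f)) := by
  subst h𝒮
  have hbasic := mul_l1Norm_sub_le_seqInner_of_isMin hSlow hKhatC hmin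
  rw [← funext hK] at hbasic
  have hnoise := seqInner_le_mul_l1Norm (A := S - Shat) (half_pos hlam).le herr (Khat - K)
  have hdecomp := l1Norm_add_l1Norm_restrictSeq_compl_gsupp_le K Khat
  have hsplit := l1Norm_restrictSeq_add_restrictSeq_compl (gsupp K) (Khat - K)
  change l1Norm (restrictSeq (gsupp K)ᶜ (Khat - K)) ≤ 3 * l1Norm (restrictSeq (gsupp K) (Khat - K))
  refine le_of_mul_le_mul_left ?_ hlam
  nlinarith [mul_le_mul_of_nonneg_left hdecomp hlam.le]

/-- inequality (21), the gLASSO estimation error satisfies the cone condition. -/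
theorem stmt_7 (p F : ℕ) (hp : 1 ≤ p) (hF : 1 ≤ F) (lam : ℝ) (hlam : 0 < lam)
    (S : Fin F → Matrix (Fin p) (Fin p) ℂ)
    (hSherm : ∀ f, (S f).IsHermitian)
    (hSlow : ∀ f, (S f - 1).PosSemidef)
    (K : Fin F → Matrix (Fin p) (Fin p) ℂ) (hK : ∀ f, K f = (S f)⁻¹)
    (𝒮 : Set (Fin p × Fin p)) (h𝒮 : 𝒮 = gsupp K)
    (Shat : Fin F → Matrix (Fin p) (Fin p) ℂ) (hShat : ∀ f, (Shat f).IsHermitian)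
    (herr : ∀ f i j, ‖S f i j - Shat f i j‖ ≤ lam / 2)
    (Khat : Fin F → Matrix (Fin p) (Fin p) ℂ) (hKhatC : memC Khat)
    (hmin : ∀ X, memC X → glassoObj Shat lam Khat ≤ glassoObj Shat lam X) :
    l1Norm (restrictSeq 𝒮ᶜ (fun f => Khat f - K f)) ≤
      3 * l1Norm (restrictSeq 𝒮 (fun f => Khat f - K f)) :=
  stmt_7_general p F lam hlam S hSlow K hK 𝒮 h𝒮 Shat herr Khat hKhatC hmin
end
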